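/- arXiv:2009.04428 — 2 statements merged into one kernel-verified Lean document; each statement's English description precedes it below -/
import Mathlib

section
/- Let d ≥ 2, let α⁰, α ∈ ℝ^d with all components nonzero, and let K be a d×d real orthogonal matrix satisfying, for all a,b ∈ {1,…,d}: α⁰_a K_{ab} = α_b K_{ab}². Then K is a signed permutation matrix, and for every nonzero entry K_{ab} one has K_{ab} = α⁰_a/α_b ∈ {+1, −1}. -/
open Matrix

/-- A signed permutation matrix: exactly one nonzero entry, equal to `±1`,
in each row and column. -/
def IsSignedPerm {d : ℕ} (K : Matrix (Fin d) (Fin d) ℝ) : Prop :=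
  ∃ (σ : Equiv.Perm (Fin d)) (s : Fin d → ℝ),
    (∀ i, s i = 1 ∨ s i = -1) ∧ ∀ i j, K i j = if j = σ i then s i else 0

/-- If `K` is orthogonal and satisfies `α⁰_a K_{ab} = α_b K_{ab}²` for all `a,b`
with all components of `α⁰` and `α` nonzero (and `d ≥ 2`), then `K` is a signed
permutation matrix and every nonzero entry satisfies `K_{ab} = α⁰_a/α_b ∈ {±1}`. -/
theorem signed_perm_of_cumulant_constraints {d : ℕ} (hd : 2 ≤ d)
    (α0 α : Fin d → ℝ) (hα0 : ∀ j, α0 j ≠ 0) (hα : ∀ j, α j ≠ 0)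
    (K : Matrix (Fin d) (Fin d) ℝ) (horth : K * Kᵀ = 1)
    (hconstr : ∀ a b, α0 a * K a b = α b * (K a b) ^ 2) :
    IsSignedPerm K ∧
      ∀ a b, K a b ≠ 0 → K a b = α0 a / α b ∧ (K a b = 1 ∨ K a b = -1) := by
  -- entry formula for nonzero entries
  have hval : ∀ a b, K a b ≠ 0 → K a b = α0 a / α b := by
    intro a b h
    have h1 : α0 a * K a b = (α b * K a b) * K a b := by
      have := hconstr a b; nlinarith [this]
    have h2 : α0 a = α b * K a b := mul_right_cancel₀ h h1
    rw [h2]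
    exact (mul_div_cancel_left₀ _ (hα b)).symm
  -- orthogonality entrywise
  have horth' : ∀ a c, ∑ b, K a b * K c b = if a = c then 1 else 0 := by
    intro a c
    have := congrFun (congrFun horth a) c
    simpa [Matrix.mul_apply, Matrix.one_apply, Matrix.transpose_apply] using this
  -- distinct rows have disjoint supports
  have hcol : ∀ a c, a ≠ c → ∀ b, K a b * K c b = 0 := by
    intro a c hac b
    have hsum : ∑ b, K a b * K c b = 0 := by simpa [hac] using horth' a c
    have key : ∀ b, 0 ≤ K a b * K c b / (α0 a * α0 c) := by
      intro b
      by_cases h1 : K a b = 0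
      · simp [h1]
      by_cases h2 : K c b = 0
      · simp [h2]
      have heq : K a b * K c b / (α0 a * α0 c) = ((α b)⁻¹) ^ 2 := by
        rw [hval a b h1, hval c b h2]
        field_simp [hα b, hα0 a, hα0 c]
      rw [heq]; positivity
    have hsum2 : ∑ b, K a b * K c b / (α0 a * α0 c) = 0 := by
      rw [← Finset.sum_div, hsum, zero_div]
    have hb := (Finset.sum_eq_zero_iff_of_nonneg (fun b _ => key b)).mp hsum2 b
      (Finset.mem_univ b)
    rcases div_eq_zero_iff.mp hb with h | h
    · exact h
    · exact absurd h (mul_ne_zero (hα0 a) (hα0 c))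
  -- each row has a nonzero entry
  have hrow : ∀ a, ∃ b, K a b ≠ 0 := by
    intro a
    by_contra h
    push_neg at h
    have := horth' a a
    simp [h] at this
  classical
  let g : Fin d → Fin d := fun a => (hrow a).choose
  have hg : ∀ a, K a (g a) ≠ 0 := fun a => (hrow a).choose_spec
  have hinj : Function.Injective g := by
    intro a c h
    by_contra hac
    have hz := hcol a c hac (g c)
    have ha := hg a
    rw [h] at ha
    exact mul_ne_zero ha (hg c) hz
  have hbij : Function.Bijective g :=
    (Fintype.bijective_iff_injective_and_card g).mpr ⟨hinj, rfl⟩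
  let σ : Equiv.Perm (Fin d) := Equiv.ofBijective g hbij
  have hσ : ∀ a, σ a = g a := fun a => rfl
  -- zero off the permutation
  have hzero : ∀ a b, b ≠ σ a → K a b = 0 := by
    intro a b hb
    by_contra h
    obtain ⟨c, hc⟩ := σ.surjective b
    have hac : a ≠ c := by
      intro e; exact hb (by rw [e, hc])
    have hKc : K c b ≠ 0 := by
      rw [← hc, hσ c]; exact hg c
    exact (mul_ne_zero h hKc) (hcol a c hac b)
  -- signs
  set s : Fin d → ℝ := fun a => K a (σ a) with hs_def
  have hs1 : ∀ a, s a * s a = 1 := by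
    intro a
    have h1 : ∑ b, K a b * K a b = 1 := by simpa using horth' a a
    have h2 : ∑ b, K a b * K a b = K a (σ a) * K a (σ a) := by
      apply Finset.sum_eq_single (σ a)
      · intro b _ hb
        rw [hzero a b hb, zero_mul]
      · intro h; exact absurd (Finset.mem_univ _) h
    rw [h2] at h1
    exact h1
  have hs : ∀ a, s a = 1 ∨ s a = -1 := fun a => mul_self_eq_one_iff.mp (hs1 a)
  constructor
  · exact ⟨σ, s, hs, fun i j => by
      by_cases h : j = σ i
      · simp [h, hs_def]
      · simp [h, hzero i j h]⟩
  · intro a b h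
    have hb : b = σ a := by
      by_contra hb
      exact h (hzero a b hb)
    refine ⟨hval a b h, ?_⟩
    rw [hb]
    exact hs a
end

section
/- Let d ≥ 2, let α⁰ ∈ ℝ^d with α⁰_1 = 0 and α⁰_a ≠ 0 for a = 2,…,d, and let α ∈ ℝ^d and K a d×d orthogonal matrix satisfying α⁰_a K_{ab} = α_b K_{ab}² for all a,b. Then there is exactly one index b with α_b = 0; for that b, K_{1b} = ±1 and K_{1ℓ} = 0 for ℓ ≠ b, and K_{ab} = 0 for a ≠ 1; and the remaining (d−1)×(d−1) submatrix of K (on rows {2,…,d} and columns ≠ b) is a signed permutation matrix. Hence K itself is a signed permutation matrix. -/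
open Matrix

/-- Static identification with one zero third cumulant: with dimension
`d + 2 ≥ 2`, if `α⁰_0 = 0`, `α⁰_a ≠ 0` for `a ≠ 0`, `K` is orthogonal and
`α⁰_a K_{ab} = α_b K_{ab}²` for all `a,b`, then there is exactly one index `b`
with `α_b = 0`; for that `b`, `K_{0b} = ±1`, `K_{0ℓ} = 0` for `ℓ ≠ b` and
`K_{ab} = 0` for `a ≠ 0`; and `K` is a signed permutation matrix. -/
theorem signed_perm_with_one_zero_cumulant {d : ℕ}
    (α0 α : Fin (d + 2) → ℝ) (h00 : α0 0 = 0)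
    (hα0 : ∀ a : Fin (d + 2), a ≠ 0 → α0 a ≠ 0)
    (K : Matrix (Fin (d + 2)) (Fin (d + 2)) ℝ) (horth : K * Kᵀ = 1)
    (hconstr : ∀ a b, α0 a * K a b = α b * (K a b) ^ 2) :
    (∃! b : Fin (d + 2), α b = 0) ∧
      (∀ b : Fin (d + 2), α b = 0 →
        (K 0 b = 1 ∨ K 0 b = -1) ∧ (∀ ℓ, ℓ ≠ b → K 0 ℓ = 0) ∧
          ∀ a : Fin (d + 2), a ≠ 0 → K a b = 0) ∧
      IsSignedPerm K := by
  classical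
  have hKtK : Kᵀ * K = 1 := mul_eq_one_comm.mp horth
  have hrow : ∀ a a', ∑ b, K a b * K a' b = if a = a' then (1:ℝ) else 0 := by
    intro a a'
    have := congrFun (congrFun horth a) a'
    simpa [Matrix.mul_apply, Matrix.one_apply, Matrix.transpose_apply] using this
  have hcol : ∀ b b', ∑ a, K a b * K a b' = if b = b' then (1:ℝ) else 0 := by
    intro b b'
    have := congrFun (congrFun hKtK b) b'
    simpa [Matrix.mul_apply, Matrix.one_apply, Matrix.transpose_apply] using this
  -- key consequence of the constraint
  have key : ∀ a b, K a b ≠ 0 → α0 a = α b * K a b := by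
    intro a b hK
    have h := hconstr a b
    have : α0 a * K a b = (α b * K a b) * K a b := by ring_nf; ring_nf at h; linarith [h]
    exact mul_right_cancel₀ hK this
  -- columns with α b = 0 vanish off row 0
  have hzero_col : ∀ b, α b = 0 → ∀ a, a ≠ 0 → K a b = 0 := by
    intro b hb a ha
    by_contra hK
    have := key a b hK
    rw [hb, zero_mul] at this
    exact hα0 a ha this
  -- nonzero entries of row 0 mark zero α
  have hrow0 : ∀ b, K 0 b ≠ 0 → α b = 0 := by
    intro b hK
    have := key 0 b hK
    rw [h00] at this
    rcases mul_eq_zero.mp this.symm with h | h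
    · exact h
    · exact absurd h hK
  -- each row has a nonzero entry
  have hex : ∀ a, ∃ b, K a b ≠ 0 := by
    intro a
    by_contra hc
    push_neg at hc
    have h := hrow a a
    simp [hc] at h
  -- existence of b with α b = 0
  obtain ⟨b₀, hb₀K⟩ := hex 0
  have hb₀ : α b₀ = 0 := hrow0 b₀ hb₀K
  -- for any b with α b = 0 : K 0 b = ±1
  have hcol1 : ∀ b, α b = 0 → K 0 b * K 0 b = 1 := by
    intro b hb
    have h : ∑ a, K a b * K a b = 1 := by simpa using hcol b b
    have h2 : ∑ a, K a b * K a b = K 0 b * K 0 b :=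
      Finset.sum_eq_single (f := fun a => K a b * K a b) 0
        (fun a _ ha => by simp [hzero_col b hb a ha])
        (fun h => absurd (Finset.mem_univ 0) h)
    rw [← h2]; exact h
  have hpm : ∀ b, α b = 0 → K 0 b = 1 ∨ K 0 b = -1 := fun b hb =>
    mul_self_eq_one_iff.mp (hcol1 b hb)
  -- row 0 vanishes off such b
  have hrow0off : ∀ b, α b = 0 → ∀ ℓ, ℓ ≠ b → K 0 ℓ = 0 := by
    intro b hb ℓ hℓ
    have h : ∑ j, K 0 j * K 0 j = 1 := by simpa using hrow 0 0
    have hsplit : ∑ j ∈ Finset.univ.erase b, K 0 j * K 0 j = 0 := by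
      have h3 := Finset.add_sum_erase Finset.univ (fun j => K 0 j * K 0 j)
        (Finset.mem_univ b)
      have h4 : K 0 b * K 0 b + ∑ x ∈ Finset.univ.erase b, K 0 x * K 0 x = 1 := by
        exact h3.trans h
      rw [hcol1 b hb] at h4
      linarith
    have hall := (Finset.sum_eq_zero_iff_of_nonneg
      (fun j _ => mul_self_nonneg (K 0 j))).mp hsplit
    have := hall ℓ (Finset.mem_erase.mpr ⟨hℓ, Finset.mem_univ ℓ⟩)
    exact mul_self_eq_zero.mp this
  -- uniqueness of b
  have huniq : ∀ b, α b = 0 → b = b₀ := by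
    intro b hb
    by_contra hne
    have hz : ∀ a, K a b = 0 := by
      intro a
      by_cases ha : a = 0
      · rw [ha]; exact hrow0off b₀ hb₀ b hne
      · exact hzero_col b hb a ha
    have h := hcol b b
    simp [hz] at h
  -- disjoint supports of distinct rows
  have disj : ∀ a a' b, a ≠ a' → K a b ≠ 0 → K a' b ≠ 0 → False := by
    intro a a' b hne hK hK'
    by_cases ha : a = 0
    · subst ha
      have hb : α b = 0 := hrow0 b hK
      exact hK' (hzero_col b hb a' (Ne.symm hne))
    · by_cases ha' : a' = 0
      · subst ha'
        have hb : α b = 0 := hrow0 b hK'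
        exact hK (hzero_col b hb a ha)
      · -- both rows nonzero index
        have hsum : ∑ ℓ, K a ℓ * K a' ℓ = 0 := by
          have h := hrow a a'
          rw [if_neg hne] at h
          exact h
        have hterm : ∀ ℓ, (α0 a * α0 a') * (K a ℓ * K a' ℓ)
            = (α ℓ)^2 * (K a ℓ * K a' ℓ)^2 ∨ K a ℓ * K a' ℓ = 0 := by
          intro ℓ
          by_cases h1 : K a ℓ = 0
          · right; rw [h1, zero_mul]
          by_cases h2 : K a' ℓ = 0
          · right; rw [h2, mul_zero]
          left
          rw [key a ℓ h1, key a' ℓ h2]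
          ring
        have hnn : ∀ ℓ ∈ Finset.univ, 0 ≤ (α0 a * α0 a') * (K a ℓ * K a' ℓ) := by
          intro ℓ _
          rcases hterm ℓ with h | h
          · rw [h]; positivity
          · rw [h, mul_zero]
        have hzero : ∑ ℓ, (α0 a * α0 a') * (K a ℓ * K a' ℓ) = 0 := by
          rw [← Finset.mul_sum, hsum, mul_zero]
        have hall := (Finset.sum_eq_zero_iff_of_nonneg hnn).mp hzero
        have hb := hall b (Finset.mem_univ b)
        have hKK : K a b * K a' b ≠ 0 := mul_ne_zero hK hK'
        have hα0a : α0 a ≠ 0 := hα0 a ha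
        have hα0a' : α0 a' ≠ 0 := hα0 a' ha'
        exact (mul_ne_zero (mul_ne_zero hα0a hα0a') hKK) hb
  -- build the permutation
  choose σ' hσ' using hex
  have hinj : Function.Injective σ' := by
    intro a a' h
    by_contra hne
    exact disj a a' (σ' a) hne (hσ' a) (h ▸ hσ' a')
  have hbij : Function.Bijective σ' := (Finite.injective_iff_bijective).mp hinj
  let σ : Equiv.Perm (Fin (d + 2)) := Equiv.ofBijective σ' hbij
  have hσ : ∀ a, σ a = σ' a := fun a => rfl
  have hoff : ∀ a j, j ≠ σ a → K a j = 0 := by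
    intro a j hj
    by_contra hK
    obtain ⟨a', ha'⟩ := hbij.surjective j
    have hne : a ≠ a' := by
      intro h; subst h; exact hj (by rw [hσ, ha'])
    exact disj a a' j hne hK (ha' ▸ hσ' a')
  have hs : ∀ a, K a (σ a) * K a (σ a) = 1 := by
    intro a
    have h : ∑ j, K a j * K a j = 1 := by simpa using hrow a a
    have h2 : ∑ j, K a j * K a j = K a (σ a) * K a (σ a) :=
      Finset.sum_eq_single (f := fun j => K a j * K a j) (σ a)
        (fun j _ hj => by simp [hoff a j hj])
        (fun h => absurd (Finset.mem_univ _) h)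
    rw [← h2]; exact h
  refine ⟨⟨b₀, hb₀, huniq⟩, ?_, ?_⟩
  · intro b hb
    exact ⟨hpm b hb, hrow0off b hb, hzero_col b hb⟩
  · refine ⟨σ, fun a => K a (σ a), fun a => mul_self_eq_one_iff.mp (hs a), ?_⟩
    intro i j
    by_cases h : j = σ i
    · rw [if_pos h, h]
    · rw [if_neg h, hoff i j h]
end
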